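/- Assume Conjecture HL(δ). Let k ≥ 1 be a fixed integer and set Λ_0(n;q) := Λ(n) − q/φ(q). There exists a constant C = C(k,δ) > 0 such that for all integers q ≥ 1, N ≥ 1, D ≥ 1 and every set 𝒟 ⊆ [1,D] of k distinct positive multiples of q: |Σ_{1≤n≤N, gcd(n,q)=1} ∏_{d∈𝒟} Λ_0(n+d;q) − 𝔖_0(𝒟;q)·#{1≤n≤N : gcd(n,q)=1}| ≤ C (q/φ(q))^k (N+D)^{1−δ}. -/

import Mathlib

open Finset Filter

/-- Number of residue classes mod `p` occupied by `D`. -/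
def vpD (D : Finset ℕ) (p : ℕ) : ℕ := (D.image (· % p)).card

/-- The singular series `𝔖(𝒟;q)`. -/
noncomputable def singSeries (D : Finset ℕ) (q : ℕ) : ℝ :=
  ((q : ℝ) / q.totient) ^ D.card *
    ∏' p : Nat.Primes, if ((p : ℕ) ∣ q) then 1
      else ((1 - 1 / ((p : ℕ) : ℝ))⁻¹) ^ D.card * (1 - (vpD D p : ℝ) / ((p : ℕ) : ℝ))

/-- The uniform Hardy–Littlewood conjecture with exponent saving `δ`. -/
def HL (δ : ℝ) : Prop :=
  0 < δ ∧ δ < 1 / 2 ∧ ∀ k : ℕ, 1 ≤ k → ∃ C : ℝ, 0 < C ∧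
    ∀ q N D : ℕ, 1 ≤ q → 1 ≤ N → 1 ≤ D →
      ∀ 𝒟 : Finset ℕ, 𝒟.card = k → (∀ d ∈ 𝒟, 0 < d ∧ d ≤ D ∧ q ∣ d) →
      |(∑ n ∈ (Finset.Icc 1 N).filter (fun n => Nat.gcd n q = 1),
          ∏ d ∈ 𝒟, ArithmeticFunction.vonMangoldt (n + d)) -
        singSeries 𝒟 q * ((Finset.Icc 1 N).filter (fun n => Nat.gcd n q = 1)).card| ≤
        C * (((N : ℝ) + D) ^ (1 - δ) : ℝ)

/-- Reduced residues modulo `q`. -/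
def residues (q : ℕ) : Finset ℕ := (Finset.range q).filter (fun a => Nat.gcd a q = 1)

/-- Integers `1 ≤ n ≤ N` with `n ≡ a (mod q)`. -/
def progSet (N q a : ℕ) : Finset ℕ := (Finset.Icc 1 N).filter (fun n => n % q = a % q)

/-- Gaussian moments `μ_k`. -/
noncomputable def gaussMoment (k : ℕ) : ℝ :=
  if Even k then (k.factorial : ℝ) / (2 ^ (k / 2) * (k / 2).factorial) else 0

/-- The constant `B_q`. -/
noncomputable def Bq (q : ℕ) : ℝ :=
  1 - Real.eulerMascheroniConstant - Real.log (2 * Real.pi) -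
    ∑ p ∈ q.primeFactors, Real.log p / ((p : ℝ) - 1)

/-- The normalized singular series `𝔖_0(𝒟;q)`. -/
noncomputable def singSeries0 (D : Finset ℕ) (q : ℕ) : ℝ :=
  ∑ J ∈ D.powerset, (-((q : ℝ) / q.totient)) ^ (D.card - J.card) * singSeries J q

/-! Expanding `∏_{d ∈ 𝒟} (Λ(n+d) - r)` over subsets `J ⊆ 𝒟`, with `r = q/φ(q)`, writes the
`Λ_0`-error as `∑_J (-r)^(k-|J|) · E(J)`, where `E(J)` is the Hardy–Littlewood error for `J`
(and `E(∅) = 0`). Each `E(J)` is bounded by HL for `|J| ≤ k`, and there are `2^k` terms with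
weights of size at most `r^k`, since `r ≥ 1`. -/

lemma Finset.prod_sub_const_eq_sum_powerset {α R : Type*} [CommRing R] [DecidableEq α]
    (s : Finset α) (f : α → R) (c : R) :
    ∏ a ∈ s, (f a - c) = ∑ J ∈ s.powerset, (-c) ^ (s.card - J.card) * ∏ a ∈ J, f a := by
  simp only [sub_eq_add_neg, Finset.prod_add, Finset.prod_const]
  refine Finset.sum_congr rfl fun J hJ => ?_
  rw [Finset.card_sdiff_of_subset (Finset.mem_powerset.mp hJ), mul_comm]

lemma Finset.sum_prod_sub_const_sub {ι α R : Type*} [CommRing R] [DecidableEq α]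
    (A : Finset ι) (s : Finset α) (g : ι → α → R) (c : R) (M : Finset α → R) :
    (∑ n ∈ A, ∏ a ∈ s, (g n a - c)) -
        (∑ J ∈ s.powerset, (-c) ^ (s.card - J.card) * M J) * A.card =
      ∑ J ∈ s.powerset, (-c) ^ (s.card - J.card) *
        ((∑ n ∈ A, ∏ a ∈ J, g n a) - M J * A.card) := by
  simp only [Finset.prod_sub_const_eq_sum_powerset, mul_sub, Finset.sum_sub_distrib,
    Finset.mul_sum, Finset.sum_mul, mul_assoc]
  rw [Finset.sum_comm]

lemma Finset.abs_sum_powerset_neg_pow_mul_le {α : Type*} (s : Finset α) {r B : ℝ}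
    (hr : 1 ≤ r) (e : Finset α → ℝ) (he : ∀ J ∈ s.powerset, |e J| ≤ B) :
    |∑ J ∈ s.powerset, (-r) ^ (s.card - J.card) * e J| ≤ 2 ^ s.card * r ^ s.card * B := by
  have hterm : ∀ J ∈ s.powerset, |(-r) ^ (s.card - J.card) * e J| ≤ r ^ s.card * B := by
    intro J hJ
    rw [abs_mul, abs_pow, abs_neg, abs_of_pos (zero_lt_one.trans_le hr)]
    exact mul_le_mul (pow_le_pow_right₀ hr (Nat.sub_le _ _)) (he J hJ) (abs_nonneg _)
      (by positivity)
  calc _ ≤ ∑ J ∈ s.powerset, |(-r) ^ (s.card - J.card) * e J| := Finset.abs_sum_le_sum_abs _ _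
    _ ≤ ∑ J ∈ s.powerset, r ^ s.card * B := Finset.sum_le_sum hterm
    _ = 2 ^ s.card * r ^ s.card * B := by
      rw [Finset.sum_const, Finset.card_powerset, nsmul_eq_mul]
      push_cast
      ring

lemma one_le_div_totient {q : ℕ} (hq : 1 ≤ q) : 1 ≤ (q : ℝ) / q.totient := by
  rw [one_le_div (by exact_mod_cast Nat.totient_pos.mpr hq)]
  exact_mod_cast Nat.totient_le q

lemma singSeries_empty (q : ℕ) : singSeries ∅ q = 1 := by
  simp [singSeries, vpD]

noncomputable def hlError (𝒟 : Finset ℕ) (q N : ℕ) : ℝ :=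
  (∑ n ∈ (Finset.Icc 1 N).filter (fun n => Nat.gcd n q = 1),
      ∏ d ∈ 𝒟, ArithmeticFunction.vonMangoldt (n + d)) -
    singSeries 𝒟 q * ((Finset.Icc 1 N).filter (fun n => Nat.gcd n q = 1)).card

lemma hlError_empty (q N : ℕ) : hlError ∅ q N = 0 := by
  simp [hlError, singSeries_empty]

lemma HL.exists_bound_of_card_le {δ : ℝ} (hHL : HL δ) (k : ℕ) :
    ∃ C : ℝ, 0 < C ∧ ∀ q N D : ℕ, 1 ≤ q → 1 ≤ N → 1 ≤ D →
      ∀ 𝒟 : Finset ℕ, 𝒟.card ≤ k → (∀ d ∈ 𝒟, 0 < d ∧ d ≤ D ∧ q ∣ d) →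
      |hlError 𝒟 q N| ≤ C * ((N : ℝ) + D) ^ (1 - δ) := by
  induction k with
  | zero =>
    refine ⟨1, one_pos, fun q N D _ _ _ 𝒟 h𝒟 _ => ?_⟩
    rw [Finset.card_eq_zero.mp (Nat.le_zero.mp h𝒟), hlError_empty, abs_zero]
    positivity
  | succ k ih =>
    obtain ⟨C, hC, hbound⟩ := ih
    obtain ⟨C', -, hbound'⟩ := hHL.2.2 (k + 1) (Nat.le_add_left 1 k)
    refine ⟨max C C', lt_max_of_lt_left hC, fun q N D hq hN hD 𝒟 h𝒟 hmem => ?_⟩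
    have hpow : (0 : ℝ) ≤ ((N : ℝ) + D) ^ (1 - δ) := by positivity
    rcases h𝒟.lt_or_eq with h𝒟 | h𝒟
    · exact (hbound q N D hq hN hD 𝒟 (Nat.lt_succ_iff.mp h𝒟) hmem).trans
        (mul_le_mul_of_nonneg_right (le_max_left C C') hpow)
    · exact (hbound' q N D hq hN hD 𝒟 h𝒟 hmem).trans
        (mul_le_mul_of_nonneg_right (le_max_right C C') hpow)

theorem correlations_Lambda0_general (δ : ℝ) (hHL : HL δ) (k : ℕ) :
    ∃ C : ℝ, 0 < C ∧ ∀ q N D : ℕ, 1 ≤ q → 1 ≤ N → 1 ≤ D →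
      ∀ 𝒟 : Finset ℕ, 𝒟.card = k → (∀ d ∈ 𝒟, 0 < d ∧ d ≤ D ∧ q ∣ d) →
      |(∑ n ∈ (Finset.Icc 1 N).filter (fun n => Nat.gcd n q = 1),
          ∏ d ∈ 𝒟, (ArithmeticFunction.vonMangoldt (n + d) - (q : ℝ) / q.totient)) -
        singSeries0 𝒟 q * ((Finset.Icc 1 N).filter (fun n => Nat.gcd n q = 1)).card| ≤
        C * ((q : ℝ) / q.totient) ^ k * (((N : ℝ) + D) ^ (1 - δ) : ℝ) := by
  obtain ⟨C, hC, hbound⟩ := hHL.exists_bound_of_card_le k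
  refine ⟨2 ^ k * C, by positivity, fun q N D hq hN hD 𝒟 hcard hmem => ?_⟩
  rw [singSeries0, Finset.sum_prod_sub_const_sub, ← hcard]
  have hsub : ∀ J ∈ 𝒟.powerset, |hlError J q N| ≤ C * ((N : ℝ) + D) ^ (1 - δ) :=
    fun J hJ => hbound q N D hq hN hD J (hcard ▸ Finset.card_le_card (Finset.mem_powerset.mp hJ))
      fun d hd => hmem d (Finset.mem_powerset.mp hJ hd)
  calc _ ≤ 2 ^ 𝒟.card * ((q : ℝ) / q.totient) ^ 𝒟.card * (C * ((N : ℝ) + D) ^ (1 - δ)) :=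
        Finset.abs_sum_powerset_neg_pow_mul_le 𝒟 (one_le_div_totient hq) _ hsub
    _ = _ := by ring

/-- Correlations of `Λ_0(·;q) = Λ(·) − q/φ(q)` under the uniform Hardy–Littlewood
conjecture (Lemma 3.1). -/
theorem correlations_Lambda0 (δ : ℝ) (hHL : HL δ) (k : ℕ) (hk : 1 ≤ k) :
    ∃ C : ℝ, 0 < C ∧ ∀ q N D : ℕ, 1 ≤ q → 1 ≤ N → 1 ≤ D →
      ∀ 𝒟 : Finset ℕ, 𝒟.card = k → (∀ d ∈ 𝒟, 0 < d ∧ d ≤ D ∧ q ∣ d) →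
      |(∑ n ∈ (Finset.Icc 1 N).filter (fun n => Nat.gcd n q = 1),
          ∏ d ∈ 𝒟, (ArithmeticFunction.vonMangoldt (n + d) - (q : ℝ) / q.totient)) -
        singSeries0 𝒟 q * ((Finset.Icc 1 N).filter (fun n => Nat.gcd n q = 1)).card| ≤
        C * ((q : ℝ) / q.totient) ^ k * (((N : ℝ) + D) ^ (1 - δ) : ℝ) :=
  correlations_Lambda0_general δ hHL k
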